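/- For every graph G and all positive integers n, r, k, one has σ(Gⁿ, r, k) ≤ σ(G, r, k), where Gⁿ is the n-th power of G. -/

import Mathlib

/-- One simultaneous move in the game: each agent stays put or moves along an edge. -/
def RSMove {V : Type*} (G : SimpleGraph V) {ι : Type*} (p q : ι → V) : Prop :=
  ∀ i, q i = p i ∨ G.Adj (p i) (q i)

/-- The spies have a winning strategy in 𝒢(G,r,s,k): there is a causal function `f`
(depending only on the history so far) producing the spies' positions at the end of each
round from the revolutionaries' positions up to that round (the revolutionaries
place/move first in each round), such that against every legal play of the
revolutionaries the spies' play is legal and, at the end of every round, each vertex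
holding at least `k` revolutionaries is occupied by a spy. -/
def SpiesWin {V : Type*} (G : SimpleGraph V) (r s k : ℕ) : Prop :=
  ∃ f : (ℕ → Fin r → V) → ℕ → Fin s → V,
    (∀ R R' n, (∀ m, m ≤ n → R m = R' m) → f R n = f R' n) ∧
    ∀ R : ℕ → Fin r → V, (∀ n, RSMove G (R n) (R (n + 1))) →
      (∀ n, RSMove G (f R n) (f R (n + 1))) ∧
      (∀ n v, k ≤ Set.ncard {i | R n i = v} → ∃ j, f R n j = v)

/-- σ(G, r, k): the minimum number of spies needed to win 𝒢(G,r,s,k). -/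
noncomputable def spySigma {V : Type*} (G : SimpleGraph V) (r k : ℕ) : ℕ :=
  sInf {s | SpiesWin G r s k}

/-- The n-th power of a graph: distinct vertices adjacent iff their distance in `G`
is at most `n` (i.e. they are joined by a walk of length at most `n`). -/
def graphPow {V : Type*} (G : SimpleGraph V) (n : ℕ) : SimpleGraph V where
  Adj v w := v ≠ w ∧ ∃ p : G.Walk v w, p.length ≤ n
  symm := by
    constructor
    rintro v w ⟨h, p, hp⟩
    exact ⟨h.symm, p.reverse, by simpa using hp⟩
  loopless := by constructor; intro v h; exact h.1 rfl

/-!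
A winning strategy for the spies on `G` transfers to `graphPow G n`: each round on the power
graph is simulated by `n` rounds on `G`. A move of a revolutionary in `graphPow G n` is spread
along a walk of length at most `n` in `G`, the spies answer with their strategy on `G`, and
their `n` moves in `G` compose to a single move in `graphPow G n`. At the end of each block the
simulated revolutionaries stand exactly where the real ones do, so every meeting is guarded.
Since `r` spies shadowing the revolutionaries win when `k > 0`, the infimum defining
`spySigma G r k` is over a nonempty set (not the junk `sInf ∅ = 0`) and is attained.
-/

namespace SimpleGraph

variable {V : Type*} {G : SimpleGraph V}

lemma Walk.getVert_succ_eq_or_adj {u v : V} (p : G.Walk u v) (j : ℕ) :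
    p.getVert (j + 1) = p.getVert j ∨ G.Adj (p.getVert j) (p.getVert (j + 1)) := by
  rcases lt_or_ge j p.length with h | h
  · exact Or.inr (p.adj_getVert_succ h)
  · left
    rw [p.getVert_of_length_le h, p.getVert_of_length_le (h.trans j.le_succ)]

lemma exists_walk_length_le_of_lazy_chain (g : ℕ → V)
    (h : ∀ m, g (m + 1) = g m ∨ G.Adj (g m) (g (m + 1))) (a j : ℕ) :
    ∃ p : G.Walk (g a) (g (a + j)), p.length ≤ j := by
  induction j with
  | zero => exact ⟨Walk.nil, le_rfl⟩
  | succ j ih =>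
    obtain ⟨p, hp⟩ := ih
    rcases h (a + j) with heq | hadj
    · exact ⟨p.copy rfl heq.symm, by simpa using hp.trans j.le_succ⟩
    · exact ⟨p.concat hadj, by simpa using hp⟩

lemma eq_or_graphPow_adj_iff {n : ℕ} {u v : V} :
    v = u ∨ (graphPow G n).Adj u v ↔ ∃ p : G.Walk u v, p.length ≤ n := by
  constructor
  · rintro (rfl | ⟨-, hp⟩)
    · exact ⟨Walk.nil, Nat.zero_le n⟩
    · exact hp
  · intro hp
    by_cases huv : u = v
    · exact Or.inl huv.symm
    · exact Or.inr ⟨huv, hp⟩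

variable (G)

open Classical in
/-- The positions along a chosen walk of length at most `n` from `u` to `v`, constantly `u` if
there is none. -/
noncomputable def walkInterp (n : ℕ) (u v : V) : ℕ → V :=
  if h : ∃ p : G.Walk u v, p.length ≤ n then h.choose.getVert else fun _ => u

variable {G}

lemma walkInterp_zero (n : ℕ) (u v : V) : walkInterp G n u v 0 = u := by
  unfold walkInterp
  split_ifs with h
  · exact h.choose.getVert_zero
  · rfl

lemma walkInterp_of_le {n j : ℕ} {u v : V} (h : ∃ p : G.Walk u v, p.length ≤ n) (hj : n ≤ j) :
    walkInterp G n u v j = v := by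
  rw [walkInterp, dif_pos h]
  exact h.choose.getVert_of_length_le (h.choose_spec.trans hj)

lemma walkInterp_succ (n : ℕ) (u v : V) (j : ℕ) :
    walkInterp G n u v (j + 1) = walkInterp G n u v j ∨
      G.Adj (walkInterp G n u v j) (walkInterp G n u v (j + 1)) := by
  unfold walkInterp
  split_ifs with h
  · exact h.choose.getVert_succ_eq_or_adj j
  · exact Or.inl rfl

end SimpleGraph

open SimpleGraph

section Refinement

variable {V ι : Type*} {G : SimpleGraph V} {n : ℕ}

lemma rsMove_graphPow_of_chain {P : ℕ → ι → V} (hP : ∀ m, RSMove G (P m) (P (m + 1))) (a : ℕ) :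
    RSMove (graphPow G n) (P a) (P (a + n)) := fun i =>
  eq_or_graphPow_adj_iff.mpr (exists_walk_length_le_of_lazy_chain (P · i) (hP · i) a n)

variable (G n)

/-- The play on `G` simulating the play `R` on `graphPow G n`: round `t` of `R` becomes the
rounds `n * t, …, n * t + n - 1`. -/
noncomputable def refinePlay (R : ℕ → ι → V) (m : ℕ) : ι → V :=
  fun i => walkInterp G n (R (m / n) i) (R (m / n + 1) i) (m % n)

variable {G n}

lemma refinePlay_apply (R : ℕ → ι → V) (t : ℕ) {j : ℕ} (hj : j < n) (i : ι) :
    refinePlay G n R (n * t + j) i = walkInterp G n (R t i) (R (t + 1) i) j := by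
  have hn : 0 < n := j.zero_le.trans_lt hj
  simp only [refinePlay, Nat.mul_add_div hn, Nat.div_eq_of_lt hj, Nat.mul_add_mod,
    Nat.mod_eq_of_lt hj, add_zero]

lemma refinePlay_mul (hn : 0 < n) (R : ℕ → ι → V) (t : ℕ) : refinePlay G n R (n * t) = R t :=
  funext fun i => by simpa [walkInterp_zero] using refinePlay_apply R t hn i

lemma exists_eq_mul_add_of_pos (hn : 0 < n) (m : ℕ) : ∃ t j, j < n ∧ m = n * t + j :=
  ⟨m / n, m % n, Nat.mod_lt m hn, (Nat.div_add_mod m n).symm⟩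

lemma refinePlay_congr (hn : 0 < n) {R R' : ℕ → ι → V} {t : ℕ} (h : ∀ m ≤ t, R m = R' m)
    {m : ℕ} (hm : m ≤ n * t) : refinePlay G n R m = refinePlay G n R' m := by
  obtain ⟨q, j, hj, rfl⟩ := exists_eq_mul_add_of_pos hn m
  rcases j.eq_zero_or_pos with rfl | hj0
  · rw [add_zero] at hm ⊢
    rw [refinePlay_mul hn, refinePlay_mul hn]
    exact h q (Nat.le_of_mul_le_mul_left hm hn)
  · have hq : q < t := Nat.lt_of_mul_lt_mul_left (by omega : n * q < n * t)
    funext i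
    rw [refinePlay_apply R q hj, refinePlay_apply R' q hj, h q hq.le, h (q + 1) hq]

lemma refinePlay_move (hn : 0 < n) {R : ℕ → ι → V}
    (hR : ∀ t, RSMove (graphPow G n) (R t) (R (t + 1))) (m : ℕ) :
    RSMove G (refinePlay G n R m) (refinePlay G n R (m + 1)) := by
  obtain ⟨t, j, hj, rfl⟩ := exists_eq_mul_add_of_pos hn m
  intro i
  have step := walkInterp_succ (G := G) n (R t i) (R (t + 1) i) j
  rw [refinePlay_apply R t hj]
  rcases (Nat.succ_le_of_lt hj).lt_or_eq with hj1 | hj1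
  · rwa [add_assoc, refinePlay_apply R t hj1]
  · have hlast : n * t + j + 1 = n * (t + 1) := by rw [Nat.mul_succ]; omega
    rw [hlast, refinePlay_mul hn]
    rwa [walkInterp_of_le (eq_or_graphPow_adj_iff.mp (hR t i)) hj1.ge] at step

end Refinement

section Strategies

variable {V : Type*} {G : SimpleGraph V} {r s k : ℕ}

lemma SpiesWin.graphPow {n : ℕ} (h : SpiesWin G r s k) (hn : 0 < n) :
    SpiesWin (graphPow G n) r s k := by
  obtain ⟨f, hcausal, hwin⟩ := h
  refine ⟨fun R t => f (refinePlay G n R) (n * t), ?_, fun R hR => ?_⟩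
  · exact fun R R' t h => hcausal _ _ _ fun m hm => refinePlay_congr hn h hm
  obtain ⟨hspies, hguard⟩ := hwin _ (refinePlay_move hn hR)
  refine ⟨fun t => by simpa [Nat.mul_succ] using rsMove_graphPow_of_chain hspies (n * t), ?_⟩
  intro t v hv
  exact hguard (n * t) v (by rwa [refinePlay_mul hn])

lemma spiesWin_self (G : SimpleGraph V) (r : ℕ) (hk : 0 < k) : SpiesWin G r r k := by
  refine ⟨fun R t => R t, fun R R' t h => h t le_rfl, fun R hR => ⟨hR, ?_⟩⟩
  intro t v hv
  exact Set.nonempty_of_ncard_ne_zero (s := {i | R t i = v}) (by omega)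

end Strategies

theorem stmt_10_general {V : Type*} (G : SimpleGraph V) (n r k : ℕ) (hn : 0 < n)
    (hk : 0 < k) : spySigma (graphPow G n) r k ≤ spySigma G r k := by
  have hne : {s | SpiesWin G r s k}.Nonempty := ⟨r, spiesWin_self G r hk⟩
  exact Nat.sInf_le ((Nat.sInf_mem hne).graphPow hn)

theorem stmt_10 {V : Type*} (G : SimpleGraph V) (n r k : ℕ) (hn : 0 < n) (hr : 0 < r)
    (hk : 0 < k) : spySigma (graphPow G n) r k ≤ spySigma G r k :=
  stmt_10_general G n r k hn hk
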